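/- For every natural number r, if s and s' are vectors in ℕ^{3^{r+1}} (componentwise nonnegative integer vectors) with M_r · s = M_r · s' and with different component sums ∑s ≠ ∑s', then min(∑s, ∑s') ≥ (3^{r+1}−1)/2. -/
import Mathlib


/-- Entries of the 2×3 matrix `M₀` with rows (1,0,1) and (0,1,1), as a function on ℕ. -/
def M0nat : ℕ → ℕ → ℤ
  | 0, 0 => 1
  | 0, 1 => 0
  | 0, 2 => 1
  | 1, 0 => 0
  | 1, 1 => 1
  | 1, 2 => 1
  | _, _ => 0

/-- Entries of the matrix `M_r` (with `3^(r+1) - 1` rows and `3^(r+1)` columns):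
`M_0` is as above, and `M_{r+1}` is the vertical stack of `M_r ⊗ (1,1,1)`
(first `3^(r+1) - 1` rows) and `I_{3^(r+1)} ⊗ M_0` (remaining `2·3^(r+1)` rows).
In the Kronecker product, row/column pairs are ordered lexicographically, i.e.
`(A ⊗ B) (p·i + s) (q·j + t) = A i j * B s t` for `B` of size `p × q`. -/
def Mnat : ℕ → ℕ → ℕ → ℤ
  | 0, i, j => M0nat i j
  | r + 1, i, j =>
    if i < 3 ^ (r + 1) - 1 then
      -- block `M_r ⊗ (1,1,1)`
      Mnat r i (j / 3)
    else
      -- block `I_{3^(r+1)} ⊗ M_0`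
      if (i - (3 ^ (r + 1) - 1)) / 2 = j / 3 then
        M0nat ((i - (3 ^ (r + 1) - 1)) % 2) (j % 3)
      else 0

/-- The matrix `M_r`. -/
def Mmat (r : ℕ) : Matrix (Fin (3 ^ (r + 1) - 1)) (Fin (3 ^ (r + 1))) ℤ :=
  Matrix.of fun i j => Mnat r i.val j.val

/-- Components of the vector `k_r` of length `3^(r+1)`:
`k_0 = (1,1,-1)` and `k_{r+1} = (k_r, k_r, -k_r)`. -/
def knat : ℕ → ℕ → ℤ
  | 0, j => if j = 2 then -1 else 1
  | r + 1, j => if j < 2 * 3 ^ (r + 1) then knat r (j % 3 ^ (r + 1)) else -knat r (j % 3 ^ (r + 1))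

/-- The vector `k_r`. -/
def kvec (r : ℕ) : Fin (3 ^ (r + 1)) → ℤ := fun j => knat r j.val

-- bottom-digit version of k
def Kb : ℕ → ℕ → ℤ
  | 0, j => knat 0 j
  | r + 1, j => Kb r (j / 3) * knat 0 (j % 3)

lemma Kb_top (r : ℕ) : ∀ j < 3 ^ (r + 2),
    Kb (r + 1) j = (if j < 2 * 3 ^ (r + 1) then 1 else -1) * Kb r (j % 3 ^ (r + 1)) := by
  induction r with
  | zero =>
    intro j hj
    norm_num at hj
    interval_cases j <;> decide
  | succ r ih =>
    intro j hj
    have hd : j / 3 < 3 ^ (r + 2) := by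
      rw [Nat.div_lt_iff_lt_mul (by norm_num)]
      calc j < 3 ^ (r + 3) := hj
        _ = 3 ^ (r + 2) * 3 := by ring
    have h1 : Kb (r + 2) j = Kb (r + 1) (j / 3) * knat 0 (j % 3) := rfl
    rw [h1, ih (j / 3) hd]
    have h2 : Kb (r + 1) (j % 3 ^ (r + 2)) = Kb r ((j % 3 ^ (r + 2)) / 3) * knat 0 ((j % 3 ^ (r + 2)) % 3) := rfl
    have h3 : (j % 3 ^ (r + 2)) % 3 = j % 3 := Nat.mod_mod_of_dvd j (dvd_pow_self 3 (by omega))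
    have h4 : (j % 3 ^ (r + 2)) / 3 = (j / 3) % 3 ^ (r + 1) := by
      have : (3 : ℕ) ^ (r + 2) = 3 * 3 ^ (r + 1) := by ring
      rw [this, Nat.mod_mul_right_div_self]
    have hp : (3:ℕ) ^ (r + 2) = 3 * 3 ^ (r + 1) := by ring
    have h5 : (j / 3 < 2 * 3 ^ (r + 1)) ↔ (j < 2 * 3 ^ (r + 2)) := by omega
    show _ = (if j < 2 * 3 ^ (r + 2) then 1 else -1) * Kb (r + 1) (j % 3 ^ (r + 2))
    rw [h2, h3, h4]
    by_cases hc : j < 2 * 3 ^ (r + 2)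
    · rw [if_pos hc, if_pos (h5.mpr hc)]
      ring
    · rw [if_neg hc, if_neg (fun h => hc (h5.mp h))]
      ring

lemma knat_eq_Kb (r : ℕ) : ∀ j < 3 ^ (r + 1), knat r j = Kb r j := by
  induction r with
  | zero => intro j hj; rfl
  | succ r ih =>
    intro j hj
    have hm : j % 3 ^ (r + 1) < 3 ^ (r + 1) := Nat.mod_lt _ (by positivity)
    rw [Kb_top r j hj]
    show (if j < 2 * 3 ^ (r + 1) then knat r (j % 3 ^ (r + 1)) else -knat r (j % 3 ^ (r + 1))) = _
    rw [ih _ hm]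
    by_cases hc : j < 2 * 3 ^ (r + 1)
    · rw [if_pos hc, if_pos hc]; ring
    · rw [if_neg hc, if_neg hc]; ring

lemma knat_succ (r j : ℕ) (hj : j < 3 ^ (r + 2)) :
    knat (r + 1) j = knat r (j / 3) * knat 0 (j % 3) := by
  have hd : j / 3 < 3 ^ (r + 1) := by
    rw [Nat.div_lt_iff_lt_mul (by norm_num)]
    calc j < 3 ^ (r + 2) := hj
      _ = 3 ^ (r + 1) * 3 := by ring
  rw [knat_eq_Kb (r + 1) j hj, knat_eq_Kb r (j / 3) hd]
  rfl

lemma knat_val (r : ℕ) (j : ℕ) : knat r j = 1 ∨ knat r j = -1 := by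
  induction r generalizing j with
  | zero => by_cases h : j = 2 <;> simp [knat, h]
  | succ r ih =>
    have e : knat (r + 1) j = if j < 2 * 3 ^ (r + 1) then knat r (j % 3 ^ (r + 1)) else -knat r (j % 3 ^ (r + 1)) := rfl
    rw [e]
    rcases ih (j % 3 ^ (r + 1)) with h | h <;> by_cases hc : j < 2 * 3 ^ (r + 1) <;>
      simp [hc, h]

lemma knat_sum (r : ℕ) : ∑ j ∈ Finset.range (3 ^ (r + 1)), knat r j = 1 := by
  induction r with
  | zero => decide
  | succ r ih =>
    have hN : (3:ℕ) ^ (r + 2) = 3 ^ (r + 1) + (3 ^ (r + 1) + 3 ^ (r + 1)) := by ring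
    rw [hN, Finset.sum_range_add, Finset.sum_range_add]
    have e1 : ∀ j ∈ Finset.range (3 ^ (r + 1)), knat (r + 1) j = knat r j := by
      intro j hj
      rw [Finset.mem_range] at hj
      show (if j < 2 * 3 ^ (r + 1) then knat r (j % 3 ^ (r + 1)) else _) = _
      rw [if_pos (by omega), Nat.mod_eq_of_lt hj]
    have e2 : ∀ j ∈ Finset.range (3 ^ (r + 1)), knat (r + 1) (3 ^ (r + 1) + j) = knat r j := by
      intro j hj
      rw [Finset.mem_range] at hj
      show (if 3 ^ (r+1) + j < 2 * 3 ^ (r + 1) then knat r ((3 ^ (r+1) + j) % 3 ^ (r + 1)) else _) = _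
      rw [if_pos (by omega), Nat.add_mod_left, Nat.mod_eq_of_lt hj]
    have e3 : ∀ j ∈ Finset.range (3 ^ (r + 1)), knat (r + 1) (3 ^ (r + 1) + (3 ^ (r + 1) + j)) = -knat r j := by
      intro j hj
      rw [Finset.mem_range] at hj
      show (if 3 ^ (r+1) + (3 ^ (r+1) + j) < 2 * 3 ^ (r + 1) then _ else -knat r ((3 ^ (r+1) + (3 ^ (r+1) + j)) % 3 ^ (r + 1))) = _
      rw [if_neg (by omega)]
      have : (3 ^ (r+1) + (3 ^ (r+1) + j)) % 3 ^ (r + 1) = j := by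
        rw [Nat.add_mod_left, Nat.add_mod_left, Nat.mod_eq_of_lt hj]
      rw [this]
    rw [Finset.sum_congr rfl e1, Finset.sum_congr rfl e2, Finset.sum_congr rfl e3, ih]
    simp [ih]

lemma sum_range_three (N : ℕ) (f : ℕ → ℤ) :
    ∑ j ∈ Finset.range (3 * N), f j
      = ∑ b ∈ Finset.range N, (f (3 * b) + f (3 * b + 1) + f (3 * b + 2)) := by
  induction N with
  | zero => simp
  | succ N ih =>
    have : 3 * (N + 1) = 3 * N + 1 + 1 + 1 := by ring
    rw [this, Finset.sum_range_succ, Finset.sum_range_succ, Finset.sum_range_succ,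
      Finset.sum_range_succ, ih]
    ring

lemma Mnat_top (r i : ℕ) (hi : i < 3 ^ (r + 1) - 1) (j : ℕ) :
    Mnat (r + 1) i j = Mnat r i (j / 3) := by
  show (if i < 3 ^ (r + 1) - 1 then Mnat r i (j / 3) else _) = _
  rw [if_pos hi]

lemma Mnat_bot (r b t : ℕ) (ht : t < 2) (j : ℕ) :
    Mnat (r + 1) (3 ^ (r + 1) - 1 + (2 * b + t)) j
      = if b = j / 3 then M0nat t (j % 3) else 0 := by
  have hN : 1 ≤ 3 ^ (r + 1) := Nat.one_le_pow _ _ (by norm_num)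
  show (if 3 ^ (r + 1) - 1 + (2 * b + t) < 3 ^ (r + 1) - 1 then _
    else if (3 ^ (r + 1) - 1 + (2 * b + t) - (3 ^ (r + 1) - 1)) / 2 = j / 3 then
      M0nat ((3 ^ (r + 1) - 1 + (2 * b + t) - (3 ^ (r + 1) - 1)) % 2) (j % 3) else 0) = _
  rw [if_neg (by omega)]
  have h1 : 3 ^ (r + 1) - 1 + (2 * b + t) - (3 ^ (r + 1) - 1) = 2 * b + t := by omega
  rw [h1]
  have h2 : (2 * b + t) / 2 = b := by omega
  have h3 : (2 * b + t) % 2 = t := by omega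
  rw [h2, h3]

lemma kernel : ∀ (r : ℕ) (x : ℕ → ℤ),
    (∀ i < 3 ^ (r + 1) - 1, ∑ j ∈ Finset.range (3 ^ (r + 1)), Mnat r i j * x j = 0) →
    ∃ c, ∀ j < 3 ^ (r + 1), x j = c * knat r j := by
  intro r
  induction r with
  | zero =>
    intro x hx
    have h0 := hx 0 (by norm_num)
    have h1 := hx 1 (by norm_num)
    have e : ∀ i j : ℕ, Mnat 0 i j = M0nat i j := fun i j => rfl
    simp only [show (3:ℕ)^(0+1) = 3 from rfl, Finset.sum_range_succ, Finset.sum_range_zero, e] at h0 h1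
    norm_num [M0nat] at h0 h1
    refine ⟨x 0, ?_⟩
    intro j hj
    norm_num at hj
    interval_cases j <;> simp [knat] <;> omega
  | succ r ih =>
    intro x hx
    have hN : 1 ≤ 3 ^ (r + 1) := Nat.one_le_pow _ _ (by norm_num)
    have h3N : (3:ℕ) ^ (r + 1 + 1) = 3 * 3 ^ (r + 1) := by ring
    -- bottom rows
    have hbot : ∀ b < 3 ^ (r + 1),
        x (3 * b) + x (3 * b + 2) = 0 ∧ x (3 * b + 1) + x (3 * b + 2) = 0 := by
      intro b hb
      have key : ∀ t < 2, M0nat t 0 * x (3 * b) + M0nat t 1 * x (3 * b + 1)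
          + M0nat t 2 * x (3 * b + 2) = 0 := by
        intro t ht
        have e := hx (3 ^ (r + 1) - 1 + (2 * b + t)) (by omega)
        rw [h3N, sum_range_three] at e
        have congrfun : ∀ b' ∈ Finset.range (3 ^ (r + 1)),
            Mnat (r+1) (3 ^ (r + 1) - 1 + (2 * b + t)) (3 * b') * x (3 * b')
            + Mnat (r+1) (3 ^ (r + 1) - 1 + (2 * b + t)) (3 * b' + 1) * x (3 * b' + 1)
            + Mnat (r+1) (3 ^ (r + 1) - 1 + (2 * b + t)) (3 * b' + 2) * x (3 * b' + 2)
            = if b = b' then M0nat t 0 * x (3 * b') + M0nat t 1 * x (3 * b' + 1)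
                + M0nat t 2 * x (3 * b' + 2) else 0 := by
          intro b' _
          rw [Mnat_bot r b t ht, Mnat_bot r b t ht, Mnat_bot r b t ht]
          have d0 : 3 * b' / 3 = b' := by omega
          have d1 : (3 * b' + 1) / 3 = b' := by omega
          have d2 : (3 * b' + 2) / 3 = b' := by omega
          have m0 : 3 * b' % 3 = 0 := by omega
          have m1 : (3 * b' + 1) % 3 = 1 := by omega
          have m2 : (3 * b' + 2) % 3 = 2 := by omega
          rw [d0, d1, d2, m0, m1, m2]
          by_cases hbb : b = b'
          · rw [if_pos hbb, if_pos hbb, if_pos hbb, if_pos hbb]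
          · rw [if_neg hbb, if_neg hbb, if_neg hbb, if_neg hbb]; ring
        rw [Finset.sum_congr rfl congrfun, Finset.sum_ite_eq (Finset.range (3 ^ (r+1))) b,
          if_pos (Finset.mem_range.mpr hb)] at e
        exact e
      have k0 := key 0 (by norm_num)
      have k1 := key 1 (by norm_num)
      norm_num [M0nat] at k0 k1
      exact ⟨by linarith, by linarith⟩
    -- top rows
    have htop : ∀ i < 3 ^ (r + 1) - 1,
        ∑ b ∈ Finset.range (3 ^ (r + 1)), Mnat r i b * x (3 * b) = 0 := by
      intro i hi
      have e := hx i (by omega)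
      rw [h3N, sum_range_three] at e
      have congrfun : ∀ b ∈ Finset.range (3 ^ (r + 1)),
          Mnat (r+1) i (3 * b) * x (3 * b) + Mnat (r+1) i (3 * b + 1) * x (3 * b + 1)
          + Mnat (r+1) i (3 * b + 2) * x (3 * b + 2)
          = Mnat r i b * x (3 * b) := by
        intro b hb
        rw [Finset.mem_range] at hb
        obtain ⟨hb1, hb2⟩ := hbot b hb
        rw [Mnat_top r i hi, Mnat_top r i hi, Mnat_top r i hi]
        have d0 : 3 * b / 3 = b := by omega
        have d1 : (3 * b + 1) / 3 = b := by omega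
        have d2 : (3 * b + 2) / 3 = b := by omega
        rw [d0, d1, d2]
        have : x (3 * b + 1) = x (3 * b) := by linarith
        rw [this, show x (3 * b + 2) = -x (3 * b) by linarith]
        ring
      rw [Finset.sum_congr rfl congrfun] at e
      exact e
    obtain ⟨c, hc⟩ := ih (fun b => x (3 * b)) htop
    refine ⟨c, ?_⟩
    intro j hj
    have hj' : j < 3 ^ (r + 2) := by
      rw [show (3:ℕ) ^ (r + 2) = 3 ^ (r + 1 + 1) by ring]; exact hj
    have hd : j / 3 < 3 ^ (r + 1) := by omega
    have hk := knat_succ r j hj'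
    obtain ⟨hb1, hb2⟩ := hbot (j / 3) hd
    have hx0 := hc (j / 3) hd
    have hu : j % 3 = 0 ∨ j % 3 = 1 ∨ j % 3 = 2 := by omega
    rcases hu with hu | hu | hu
    · have hjj : j = 3 * (j / 3) := by omega
      have e := congrArg x hjj
      rw [hk, hu, show knat 0 0 = 1 from rfl, mul_one, e]
      linarith
    · have hjj : j = 3 * (j / 3) + 1 := by omega
      have e := congrArg x hjj
      rw [hk, hu, show knat 0 1 = 1 from rfl, mul_one, e]
      linarith
    · have hjj : j = 3 * (j / 3) + 2 := by omega
      have e := congrArg x hjj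
      rw [hk, hu, show knat 0 2 = -1 from rfl, e]
      linarith

lemma knat_counts (r : ℕ) :
    (Finset.univ.filter (fun j : Fin (3 ^ (r + 1)) => knat r j.val = -1)).card
      = (3 ^ (r + 1) - 1) / 2 ∧
    (Finset.univ.filter (fun j : Fin (3 ^ (r + 1)) => knat r j.val = 1)).card
      = (3 ^ (r + 1) - 1) / 2 + 1 := by
  classical
  set N := 3 ^ (r + 1) with hN
  have hsum : ∑ j : Fin N, knat r j.val = 1 := by
    rw [Fin.sum_univ_eq_sum_range (fun j => knat r j) N]; exact knat_sum r
  have hsplit := Finset.sum_filter_add_sum_filter_not Finset.univ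
    (fun j : Fin N => knat r j.val = 1) (fun j => knat r j.val)
  have hpos : ∑ j ∈ Finset.univ.filter (fun j : Fin N => knat r j.val = 1), knat r j.val
      = (Finset.univ.filter (fun j : Fin N => knat r j.val = 1)).card := by
    rw [Finset.sum_congr rfl (fun j hj => (Finset.mem_filter.mp hj).2)]
    simp
  have hnegset : Finset.univ.filter (fun j : Fin N => ¬ knat r j.val = 1)
      = Finset.univ.filter (fun j : Fin N => knat r j.val = -1) := by
    apply Finset.filter_congr
    intro j _
    rcases knat_val r j.val with h | h <;> simp [h]
  have hneg : ∑ j ∈ Finset.univ.filter (fun j : Fin N => ¬ knat r j.val = 1), knat r j.val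
      = -(Finset.univ.filter (fun j : Fin N => knat r j.val = -1)).card := by
    rw [hnegset, Finset.sum_congr rfl (fun j hj => (Finset.mem_filter.mp hj).2)]
    simp
  rw [hpos, hneg, hsum] at hsplit
  have hcard := Finset.card_filter_add_card_filter_not
    (s := (Finset.univ : Finset (Fin N))) (p := fun j : Fin N => knat r j.val = 1)
  rw [hnegset] at hcard
  simp only [Finset.card_univ, Fintype.card_fin] at hcard
  have hN1 : 1 ≤ N := Nat.one_le_pow _ _ (by norm_num)
  constructor <;> omega

lemma bound_aux (r : ℕ) (s s' : Fin (3 ^ (r + 1)) → ℕ) (c : ℤ) (hcpos : 0 < c)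
    (hval : ∀ j : Fin (3 ^ (r + 1)), (s j : ℤ) - (s' j : ℤ) = c * knat r j.val) :
    (3 ^ (r + 1) - 1) / 2 ≤ ∑ j, s j ∧ (3 ^ (r + 1) - 1) / 2 ≤ ∑ j, s' j := by
  classical
  obtain ⟨hnegcard, hposcard⟩ := knat_counts r
  constructor
  · -- sum of s over positive positions
    have h1 : ∀ j ∈ Finset.univ.filter (fun j : Fin (3 ^ (r + 1)) => knat r j.val = 1),
        1 ≤ s j := by
      intro j hj
      have hk := (Finset.mem_filter.mp hj).2
      have := hval j
      rw [hk, mul_one] at this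
      have : (1 : ℤ) ≤ (s j : ℤ) := by
        have hs' : (0 : ℤ) ≤ (s' j : ℤ) := Int.natCast_nonneg _
        omega
      exact_mod_cast this
    calc (3 ^ (r + 1) - 1) / 2 ≤ (3 ^ (r + 1) - 1) / 2 + 1 := by omega
      _ = (Finset.univ.filter (fun j : Fin (3 ^ (r + 1)) => knat r j.val = 1)).card := hposcard.symm
      _ = ∑ _j ∈ Finset.univ.filter (fun j : Fin (3 ^ (r + 1)) => knat r j.val = 1), 1 := by
          simp
      _ ≤ ∑ j ∈ Finset.univ.filter (fun j : Fin (3 ^ (r + 1)) => knat r j.val = 1), s j :=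
          Finset.sum_le_sum h1
      _ ≤ ∑ j, s j := Finset.sum_le_sum_of_subset (Finset.filter_subset _ _)
  · have h1 : ∀ j ∈ Finset.univ.filter (fun j : Fin (3 ^ (r + 1)) => knat r j.val = -1),
        1 ≤ s' j := by
      intro j hj
      have hk := (Finset.mem_filter.mp hj).2
      have := hval j
      rw [hk] at this
      have : (1 : ℤ) ≤ (s' j : ℤ) := by
        have hs : (0 : ℤ) ≤ (s j : ℤ) := Int.natCast_nonneg _
        omega
      exact_mod_cast this
    calc (3 ^ (r + 1) - 1) / 2
        = (Finset.univ.filter (fun j : Fin (3 ^ (r + 1)) => knat r j.val = -1)).card := hnegcard.symm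
      _ = ∑ _j ∈ Finset.univ.filter (fun j : Fin (3 ^ (r + 1)) => knat r j.val = -1), 1 := by
          simp
      _ ≤ ∑ j ∈ Finset.univ.filter (fun j : Fin (3 ^ (r + 1)) => knat r j.val = -1), s' j :=
          Finset.sum_le_sum h1
      _ ≤ ∑ j, s' j := Finset.sum_le_sum_of_subset (Finset.filter_subset _ _)


open Matrix in
/-- If two componentwise nonnegative integer vectors `s, s' ∈ ℕ^(3^(r+1))` satisfy
`M_r · s = M_r · s'` but have different component sums, then
`min(∑ s, ∑ s') ≥ (3^(r+1)-1)/2`. -/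
theorem min_sum_ge_of_indistinguishable (r : ℕ) (s s' : Fin (3 ^ (r + 1)) → ℕ)
    (h : Mmat r *ᵥ (fun j => (s j : ℤ)) = Mmat r *ᵥ (fun j => (s' j : ℤ)))
    (hsum : ∑ j, s j ≠ ∑ j, s' j) :
    (3 ^ (r + 1) - 1) / 2 ≤ min (∑ j, s j) (∑ j, s' j) := by
  classical
  set x : ℕ → ℤ := fun j =>
    if hj : j < 3 ^ (r + 1) then (s ⟨j, hj⟩ : ℤ) - (s' ⟨j, hj⟩ : ℤ) else 0 with hxdef
  have hxval : ∀ j : Fin (3 ^ (r + 1)), x j.val = (s j : ℤ) - (s' j : ℤ) := by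
    intro j
    rw [hxdef]
    simp [j.isLt]
  have hx : ∀ i < 3 ^ (r + 1) - 1,
      ∑ j ∈ Finset.range (3 ^ (r + 1)), Mnat r i j * x j = 0 := by
    intro i hi
    have hrow := congrFun h ⟨i, hi⟩
    simp only [Matrix.mulVec, dotProduct, Mmat, Matrix.of_apply] at hrow
    have e1 : ∑ j ∈ Finset.range (3 ^ (r + 1)), Mnat r i j * x j
        = ∑ j : Fin (3 ^ (r + 1)), Mnat r i j.val * x j.val :=
      (Fin.sum_univ_eq_sum_range (fun j => Mnat r i j * x j) _).symm
    rw [e1]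
    have e2 : ∀ j : Fin (3 ^ (r + 1)), Mnat r i j.val * x j.val
        = Mnat r i j.val * (s j : ℤ) - Mnat r i j.val * (s' j : ℤ) := by
      intro j; rw [hxval j]; ring
    rw [Finset.sum_congr rfl (fun j _ => e2 j), Finset.sum_sub_distrib, hrow, sub_self]
  obtain ⟨c, hc⟩ := kernel r x hx
  have hxk : ∀ j : Fin (3 ^ (r + 1)), (s j : ℤ) - (s' j : ℤ) = c * knat r j.val := by
    intro j
    rw [← hxval j]
    exact hc j.val j.isLt
  have hsumx : ((∑ j, s j : ℕ) : ℤ) - ((∑ j, s' j : ℕ) : ℤ) = c := by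
    push_cast
    rw [← Finset.sum_sub_distrib, Finset.sum_congr rfl (fun j _ => hxk j), ← Finset.mul_sum]
    rw [Fin.sum_univ_eq_sum_range (fun j => knat r j) _, knat_sum, mul_one]
  have hcne : c ≠ 0 := by
    intro hc0
    rw [hc0] at hsumx
    apply hsum
    have : ((∑ j, s j : ℕ) : ℤ) = ((∑ j, s' j : ℕ) : ℤ) := by omega
    exact_mod_cast this
  rcases lt_or_gt_of_ne hcne with hneg | hpos
  · have := bound_aux r s' s (-c) (by omega) (fun j => by
      have h1 := hxk j; linarith)
    exact le_min this.2 this.1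
  · have := bound_aux r s s' c hpos hxk
    exact le_min this.1 this.2
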